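/- Let X be compact and ≿ a continuous, gapless preference with connected indifference classes. A set D ⊆ X is a maximal domain if and only if D is a connected domain that contains every indifferent alternative and has no exterior bound. -/
import Mathlib


variable {X : Type*}

/-- A set on which the preference is complete. -/
def IsPrefDomain (r : X → X → Prop) (A : Set X) : Prop :=
  ∀ x ∈ A, ∀ y ∈ A, r x y ∨ r y x

/-- A maximal domain of comparability. -/
def IsMaxPrefDomain (r : X → X → Prop) (A : Set X) : Prop :=
  IsPrefDomain r A ∧ ∀ B : Set X, IsPrefDomain r B → A ⊆ B → B = A

/-- Strict preference. -/
def StrictPref (r : X → X → Prop) (x y : X) : Prop :=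
  r x y ∧ ¬ r y x

/-- Gapless preference. -/
def Gapless (r : X → X → Prop) : Prop :=
  ∀ x y, StrictPref r x y → ∃ z, StrictPref r x z ∧ StrictPref r z y

/-- Continuity: upper and lower sets are closed. -/
def ContinuousPref [TopologicalSpace X] (r : X → X → Prop) : Prop :=
  ∀ x : X, IsClosed {y | r y x} ∧ IsClosed {y | r x y}

/-- A compact totally preordered closed set has a greatest element. -/
lemma exists_greatest_aux [TopologicalSpace X] [CompactSpace X]
    (r : X → X → Prop) (hrefl : Reflexive r) (htrans : Transitive r)
    {K : Set X} (hK : IsClosed K) (hne : K.Nonempty)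
    (htot : ∀ x ∈ K, ∀ y ∈ K, r x y ∨ r y x)
    (hcont : ∀ x : X, IsClosed {y | r y x}) :
    ∃ m ∈ K, ∀ c ∈ K, r m c := by
  haveI : Nonempty K := hne.to_subtype
  set t : K → Set X := fun c => K ∩ {d | r d c} with ht
  have hclosed : ∀ c : K, IsClosed (t c) := fun c => hK.inter (hcont c)
  have hnonempty : ∀ c : K, (t c).Nonempty :=
    fun c => ⟨c, c.2, hrefl c⟩
  have hdir : Directed (· ⊇ ·) t := by
    intro c1 c2
    rcases htot c1 c1.2 c2 c2.2 with h | h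
    · exact ⟨c1, fun d hd => hd, fun d hd => ⟨hd.1, htrans hd.2 h⟩⟩
    · exact ⟨c2, fun d hd => ⟨hd.1, htrans hd.2 h⟩, fun d hd => hd⟩
  have := IsCompact.nonempty_iInter_of_directed_nonempty_isCompact_isClosed t hdir
    hnonempty (fun c => (hclosed c).isCompact) hclosed
  obtain ⟨m, hm⟩ := this
  simp only [Set.mem_iInter] at hm
  refine ⟨m, (hm ⟨hne.some, hne.some_mem⟩).1, fun c hc => (hm ⟨c, hc⟩).2⟩

/-- Core lemma: a closed maximal domain cannot be separated with `a0` in one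
piece above `b0` in the other piece. -/
lemma core_no_separation [TopologicalSpace X] [CompactSpace X]
    (r : X → X → Prop)
    (hrefl : Reflexive r) (htrans : Transitive r)
    (hcont : ContinuousPref r) (hgap : Gapless r)
    (hindconn : ∀ x : X, IsConnected {y | r x y ∧ r y x})
    {D : Set X} (hdom : IsPrefDomain r D)
    (hmax : ∀ B : Set X, IsPrefDomain r B → D ⊆ B → B = D)
    (hDcl : IsClosed D)
    (hind : ∀ x ∈ D, ∀ y : X, r x y → r y x → y ∈ D)
    {A B : Set X} (hAcl : IsClosed A) (hBcl : IsClosed B)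
    (hcover : D ⊆ A ∪ B) (hdisj : D ∩ (A ∩ B) = ∅)
    {a0 b0 : X} (ha0 : a0 ∈ D ∩ A) (hb0 : b0 ∈ D ∩ B) (hab : r a0 b0) : False := by
  -- no element of D ∩ A is indifferent to an element of D ∩ B
  have hnoind : ∀ x ∈ D ∩ A, ∀ y ∈ D ∩ B, r x y → r y x → False := by
    intro x hx y hy hxy hyx
    have hI : IsConnected {z | r x z ∧ r z x} := hindconn x
    have hIsub : {z | r x z ∧ r z x} ⊆ D := fun z hz => hind x hx.1 z hz.1 hz.2
    have := isPreconnected_closed_iff.1 hI.isPreconnected A B hAcl hBcl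
      (fun z hz => hcover (hIsub hz))
      ⟨x, ⟨hrefl x, hrefl x⟩, hx.2⟩ ⟨y, ⟨hxy, hyx⟩, hy.2⟩
    obtain ⟨z, hzI, hzAB⟩ := this
    have : z ∈ D ∩ (A ∩ B) := ⟨hIsub hzI, hzAB⟩
    rw [hdisj] at this
    exact this
  -- B' : elements of D ∩ B below a0; has a greatest element b*
  set B' : Set X := D ∩ B ∩ {d | r a0 d} with hB'
  have hB'cl : IsClosed B' := (hDcl.inter hBcl).inter (hcont a0).2
  have hB'ne : B'.Nonempty := ⟨b0, ⟨hb0.1, hb0.2⟩, hab⟩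
  have hB'tot : ∀ x ∈ B', ∀ y ∈ B', r x y ∨ r y x :=
    fun x hx y hy => hdom x hx.1.1 y hy.1.1
  obtain ⟨bs, hbsB', hbsg⟩ := exists_greatest_aux r hrefl htrans hB'cl hB'ne hB'tot
    (fun x => (hcont x).1)
  -- A2 : elements of D ∩ A above b*; has a least element a*
  set A2 : Set X := D ∩ A ∩ {d | r d bs} with hA2
  have hA2cl : IsClosed A2 := (hDcl.inter hAcl).inter (hcont bs).1
  have ha0bs : r a0 bs := hbsB'.2
  have hA2ne : A2.Nonempty := ⟨a0, ⟨ha0.1, ha0.2⟩, ha0bs⟩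
  have hA2tot : ∀ x ∈ A2, ∀ y ∈ A2, (fun x y => r y x) x y ∨ (fun x y => r y x) y x :=
    fun x hx y hy => (hdom x hx.1.1 y hy.1.1).symm
  obtain ⟨as, hasA2, hasl⟩ := exists_greatest_aux (fun x y => r y x)
    (fun x => hrefl x) (fun _ _ _ h1 h2 => htrans h2 h1) hA2cl hA2ne hA2tot
    (fun x => (hcont x).2)
  -- a* strictly above b*
  have hasbs : r as bs := hasA2.2
  have hnbsas : ¬ r bs as := fun h => hnoind as ⟨hasA2.1.1, hasA2.1.2⟩
    bs ⟨hbsB'.1.1, hbsB'.1.2⟩ hasbs h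
  -- no element of D strictly between
  have hbetween : ∀ d ∈ D, r d as ∨ r bs d := by
    intro d hd
    rcases hdom d hd as hasA2.1.1 with h | h
    · exact Or.inl h
    rcases hdom bs hbsB'.1.1 d hd with h' | h'
    · exact Or.inr h'
    -- r as d, ¬ in first case means we don't know ¬ r d as; re-case:
    by_cases hda : r d as
    · exact Or.inl hda
    by_cases hbd : r bs d
    · exact Or.inr hbd
    -- now: r as d (h), r d bs (h'), ¬ r d as, ¬ r bs d
    exfalso
    rcases hcover hd with hdA | hdB
    · exact hda (hasl d ⟨⟨hd, hdA⟩, h'⟩)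
    · have : r a0 d := htrans (hasl a0 ⟨⟨ha0.1, ha0.2⟩, ha0bs⟩ : r a0 as) h
      exact hbd (hbsg d ⟨⟨hd, hdB⟩, this⟩)
  -- gapless gives a new comparable element
  obtain ⟨z, hz1, hz2⟩ := hgap as bs ⟨hasbs, hnbsas⟩
  have hzcomp : ∀ d ∈ D, r d z ∨ r z d := by
    intro d hd
    rcases hbetween d hd with h | h
    · exact Or.inl (htrans h hz1.1)
    · exact Or.inr (htrans hz2.1 h)
  have hEdom : IsPrefDomain r (insert z D) := by
    intro x hx y hy
    rcases hx with rfl | hx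
    · rcases hy with rfl | hy
      · exact Or.inl (hrefl _)
      · exact (hzcomp y hy).symm
    · rcases hy with rfl | hy
      · exact hzcomp x hx
      · exact hdom x hx y hy
  have hzD : z ∈ D := by
    have := hmax (insert z D) hEdom (Set.subset_insert z D)
    rw [← this]; exact Set.mem_insert z D
  rcases hbetween z hzD with h | h
  · exact hz1.2 h
  · exact hz2.2 h

theorem maxDomain_characterization [TopologicalSpace X] [CompactSpace X] [Nonempty X]
    (r : X → X → Prop)
    (hrefl : Reflexive r) (htrans : Transitive r)
    (hcont : ContinuousPref r) (hgap : Gapless r)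
    (hindconn : ∀ x : X, IsConnected {y | r x y ∧ r y x})
    (D : Set X) :
    IsMaxPrefDomain r D ↔
      (IsConnected D ∧ IsPrefDomain r D ∧
        (∀ x ∈ D, ∀ y : X, r x y → r y x → y ∈ D) ∧
        (∀ x : X, (∀ d ∈ D, r x d) → x ∈ D) ∧
        (∀ y : X, (∀ d ∈ D, r d y) → y ∈ D)) := by
  constructor
  · rintro ⟨hdom, hmax⟩
    -- indifference closed
    have hind : ∀ x ∈ D, ∀ y : X, r x y → r y x → y ∈ D := by
      intro x hx y hxy hyx
      have hEdom : IsPrefDomain r (insert y D) := by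
        intro a ha b hb
        rcases ha with rfl | ha
        · rcases hb with rfl | hb
          · exact Or.inl (hrefl _)
          · rcases hdom x hx b hb with h | h
            · exact Or.inl (htrans hyx h)
            · exact Or.inr (htrans h hxy)
        · rcases hb with rfl | hb
          · rcases hdom x hx a ha with h | h
            · exact Or.inr (htrans hyx h)
            · exact Or.inl (htrans h hxy)
          · exact hdom a ha b hb
      have := hmax (insert y D) hEdom (Set.subset_insert y D)
      rw [← this]; exact Set.mem_insert y D
    -- no upper/lower exterior bound
    have hub : ∀ x : X, (∀ d ∈ D, r x d) → x ∈ D := by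
      intro x hxall
      have hEdom : IsPrefDomain r (insert x D) := by
        intro a ha b hb
        rcases ha with rfl | ha
        · rcases hb with rfl | hb
          · exact Or.inl (hrefl _)
          · exact Or.inl (hxall b hb)
        · rcases hb with rfl | hb
          · exact Or.inr (hxall a ha)
          · exact hdom a ha b hb
      have := hmax (insert x D) hEdom (Set.subset_insert x D)
      rw [← this]; exact Set.mem_insert x D
    have hlb : ∀ y : X, (∀ d ∈ D, r d y) → y ∈ D := by
      intro y hyall
      have hEdom : IsPrefDomain r (insert y D) := by
        intro a ha b hb
        rcases ha with rfl | ha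
        · rcases hb with rfl | hb
          · exact Or.inl (hrefl _)
          · exact Or.inr (hyall b hb)
        · rcases hb with rfl | hb
          · exact Or.inl (hyall a ha)
          · exact hdom a ha b hb
      have := hmax (insert y D) hEdom (Set.subset_insert y D)
      rw [← this]; exact Set.mem_insert y D
    -- D is closed
    have hDcl : IsClosed D := by
      have hstep : ∀ y ∈ closure D, ∀ d ∈ D, r y d ∨ r d y := by
        intro y hy d hd
        have hsub : D ⊆ {z | r z d} ∪ {z | r d z} := by
          intro e he
          rcases hdom e he d hd with h | h
          · exact Or.inl h
          · exact Or.inr h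
        have := closure_minimal hsub ((hcont d).1.union (hcont d).2) hy
        exact this
      have hcldom : IsPrefDomain r (closure D) := by
        intro x hx y hy
        have hsub : D ⊆ {z | r z y} ∪ {z | r y z} := by
          intro e he
          rcases hstep y hy e he with h | h
          · exact Or.inr h
          · exact Or.inl h
        have := closure_minimal hsub ((hcont y).1.union (hcont y).2) hx
        rcases this with h | h
        · exact Or.inl h
        · exact Or.inr h
      have := hmax (closure D) hcldom subset_closure
      exact this ▸ isClosed_closure
    -- D is nonempty
    have hDne : D.Nonempty := by
      by_contra h
      rw [Set.not_nonempty_iff_eq_empty] at h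
      obtain ⟨x⟩ := ‹Nonempty X›
      have hx : IsPrefDomain r {x} := by
        rintro a rfl b rfl
        exact Or.inl (hrefl _)
      have := hmax {x} hx (h ▸ Set.empty_subset {x})
      rw [h] at this
      exact (Set.singleton_nonempty x).ne_empty this
    refine ⟨⟨hDne, ?_⟩, hdom, hind, hub, hlb⟩
    -- D is preconnected
    rw [isPreconnected_closed_iff]
    intro t t' ht ht' hcov hne1 hne2
    by_contra hcontra
    rw [Set.not_nonempty_iff_eq_empty] at hcontra
    rw [Set.eq_empty_iff_forall_notMem] at hcontra
    have hdisj : D ∩ (t ∩ t') = ∅ := by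
      rw [Set.eq_empty_iff_forall_notMem]
      exact fun x hx => hcontra x ⟨hx.1, hx.2.1, hx.2.2⟩
    have hdisj' : D ∩ (t' ∩ t) = ∅ := by
      rw [Set.eq_empty_iff_forall_notMem]
      exact fun x hx => hcontra x ⟨hx.1, hx.2.2, hx.2.1⟩
    obtain ⟨a0, ha0D, ha0t⟩ := hne1
    obtain ⟨b0, hb0D, hb0t'⟩ := hne2
    rcases hdom a0 ha0D b0 hb0D with h | h
    · exact core_no_separation r hrefl htrans hcont hgap hindconn hdom hmax hDcl hind
        ht ht' hcov hdisj ⟨ha0D, ha0t⟩ ⟨hb0D, hb0t'⟩ h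
    · exact core_no_separation r hrefl htrans hcont hgap hindconn hdom hmax hDcl hind
        ht' ht (fun x hx => (hcov hx).symm) hdisj' ⟨hb0D, hb0t'⟩ ⟨ha0D, ha0t⟩ h
  · rintro ⟨hconn, hdom, hind, hub, hlb⟩
    refine ⟨hdom, fun B hB hDB => ?_⟩
    refine Set.Subset.antisymm (fun b hb => ?_) hDB
    by_cases hU : ∀ d ∈ D, r b d
    · exact hub b hU
    by_cases hL : ∀ d ∈ D, r d b
    · exact hlb b hL
    push_neg at hU hL
    obtain ⟨d1, hd1D, hd1⟩ := hU
    obtain ⟨d2, hd2D, hd2⟩ := hL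
    have hrd1b : r d1 b := (hB d1 (hDB hd1D) b hb).resolve_right hd1
    have hrbd2 : r b d2 := (hB b hb d2 (hDB hd2D)).resolve_right hd2
    have := isPreconnected_closed_iff.1 hconn.isPreconnected
      {y | r y b} {y | r b y} (hcont b).1 (hcont b).2
      (fun d hd => hB d (hDB hd) b hb)
      ⟨d1, hd1D, hrd1b⟩ ⟨d2, hd2D, hrbd2⟩
    obtain ⟨d, hdD, hdb, hbd⟩ := this
    exact hind d hdD b hdb hbd
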